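/- With c_n := |A_n \ A_{n-1}|, one has c_n ≥ c_{n-1}^2 for all n ≥ 1, and consequently c_{n-k}^{2^k} ≤ c_n for all 0 ≤ k ≤ n, and c_n ≥ 2^{2^{n-2}} for all n ≥ 2. -/

import Mathlib

open ZFSet Finset

noncomputable section

abbrev HFSet := ZFSet.{0}

/-- The adjunctive hierarchy of hereditarily finite sets. -/
def A : ℕ → Set HFSet
  | 0 => {∅}
  | n + 1 => {∅} ∪ {z | ∃ x ∈ A n, ∃ y ∈ A n, z = insert y x}

/-- Integer-indexed version, with `A n = ∅` for `n < 0`. -/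
def Az (n : ℤ) : Set HFSet := if 0 ≤ n then A n.toNat else ∅

/-- The cumulative hierarchy (von Neumann) of hereditarily finite sets. -/
def W : ℕ → HFSet
  | 0 => ∅
  | n + 1 => ZFSet.powerset (W n)

/-- A ZF set is hereditarily finite if it lies in some finite level of the
cumulative hierarchy. -/
def IsHF (x : HFSet) : Prop := ∃ n, x ∈ W n

/-- The adjunctive rank. -/
def ark (x : HFSet) : ℕ := sInf {n | x ∈ A n}

/-- The (von Neumann) rank of a hereditarily finite set. -/
def rk (x : HFSet) : ℕ := sInf {n | x ∈ W (n + 1)}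

/-- `B n m` = sets in `A n \ A (n-1)` all of whose elements lie in `A m`. -/
def B (n m : ℤ) : Set HFSet :=
  {x | x ∈ Az n ∧ x ∉ Az (n - 1) ∧ ∀ y, y ∈ x → y ∈ Az m}

def b (n m : ℤ) : ℕ := (B n m).ncard

def a (n : ℕ) : ℕ := (A n).ncard

def c (n : ℕ) : ℕ := (Az n \ Az ((n : ℤ) - 1)).ncard

lemma A_succ_mem_iff {n : ℕ} {z : HFSet} :
    z ∈ A (n+1) ↔ z = ∅ ∨ ∃ x ∈ A n, ∃ y ∈ A n, z = insert y x := by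
  simp [A, Set.mem_union, Set.mem_setOf_eq]

lemma A_mono (n : ℕ) : A n ⊆ A (n+1) := by
  induction n with
  | zero =>
    intro z hz
    simp only [A, Set.mem_singleton_iff] at hz
    exact A_succ_mem_iff.2 (Or.inl hz)
  | succ n ih =>
    intro z hz
    rcases A_succ_mem_iff.1 hz with h | ⟨x, hx, y, hy, rfl⟩
    · exact A_succ_mem_iff.2 (Or.inl h)
    · exact A_succ_mem_iff.2 (Or.inr ⟨x, ih hx, y, ih hy, rfl⟩)

lemma A_mono_le {m n : ℕ} (h : m ≤ n) : A m ⊆ A n := by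
  induction n with
  | zero => simp [Nat.le_zero.mp h]
  | succ n ih =>
    rcases Nat.lt_or_ge m (n+1) with h' | h'
    · exact (ih (Nat.lt_succ_iff.mp h')).trans (A_mono n)
    · have : m = n + 1 := le_antisymm h h'
      simp [this]

lemma A_finite (n : ℕ) : (A n).Finite := by
  induction n with
  | zero => simp [A]
  | succ n ih =>
    have hsub : A (n+1) ⊆ {∅} ∪ Set.image2 (fun x y => insert y x) (A n) (A n) := by
      intro z hz
      rcases A_succ_mem_iff.1 hz with h | ⟨x, hx, y, hy, rfl⟩
      · exact Or.inl h
      · exact Or.inr ⟨x, hx, y, hy, rfl⟩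
    exact ((Set.finite_singleton _).union (Set.Finite.image2 _ ih ih)).subset hsub

lemma mem_of_mem_A : ∀ n : ℕ, ∀ x ∈ A (n+1), ∀ y : HFSet, y ∈ x → y ∈ A n := by
  intro n
  induction n with
  | zero =>
    intro x hx y hy
    rcases A_succ_mem_iff.1 hx with rfl | ⟨a, ha, b, hb, rfl⟩
    · exact absurd hy (by simp)
    · simp only [A, Set.mem_singleton_iff] at ha hb
      subst ha; subst hb
      rcases ZFSet.mem_insert_iff.1 hy with rfl | h
      · simp [A]
      · exact absurd h (by simp)
  | succ n ih =>
    intro x hx y hy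
    rcases A_succ_mem_iff.1 hx with rfl | ⟨a, ha, b, hb, rfl⟩
    · exact absurd hy (by simp)
    · rcases ZFSet.mem_insert_iff.1 hy with rfl | h
      · exact hb
      · exact A_mono n (ih a ha y h)

lemma c_eq (n : ℕ) (hn : 1 ≤ n) : c n = (A n \ A (n-1)).ncard := by
  have h0 : (0:ℤ) ≤ (n:ℤ) := by positivity
  have h1 : (0:ℤ) ≤ (n:ℤ) - 1 := by omega
  have h2 : ((n:ℤ) - 1).toNat = n - 1 := by omega
  simp [c, Az, h0, h1, h2, hn]

lemma key (n : ℕ) (hn : 1 ≤ n) :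
    (A n \ A (n-1)).ncard ^ 2 ≤ (A (n+1) \ A n).ncard := by
  set S := A n \ A (n-1) with hS
  set T := A (n+1) \ A n with hT
  have hSfin : S.Finite := (A_finite n).diff
  have hTfin : T.Finite := (A_finite (n+1)).diff
  have helem : ∀ x ∈ A n, ∀ y : HFSet, y ∈ x → y ∈ A (n-1) := by
    obtain ⟨m, rfl⟩ : ∃ m, n = m + 1 := ⟨n-1, by omega⟩
    simpa using mem_of_mem_A m
  have hmap : ∀ p : HFSet × HFSet, p.1 ∈ S → p.2 ∈ S → insert p.2 p.1 ∈ T := by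
    rintro ⟨x, y⟩ ⟨hx1, hx2⟩ ⟨hy1, hy2⟩
    constructor
    · exact A_succ_mem_iff.2 (Or.inr ⟨x, hx1, y, hy1, rfl⟩)
    · intro hmem
      exact hy2 (helem _ hmem y (ZFSet.mem_insert_iff.2 (Or.inl rfl)))
  have hinj : ∀ p q : HFSet × HFSet, p.1 ∈ S → p.2 ∈ S → q.1 ∈ S → q.2 ∈ S →
      insert p.2 p.1 = insert q.2 q.1 → p = q := by
    rintro ⟨x, y⟩ ⟨x', y'⟩ ⟨hx1, hx2⟩ ⟨hy1, hy2⟩ ⟨hx1', hx2'⟩ ⟨hy1', hy2'⟩ heq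
    have hyx : ∀ z : HFSet, z ∈ x → z ∈ A (n-1) := fun z hz => helem x hx1 z hz
    have hyx' : ∀ z : HFSet, z ∈ x' → z ∈ A (n-1) := fun z hz => helem x' hx1' z hz
    have hyy' : y = y' := by
      have : y ∈ insert y' x' := heq ▸ ZFSet.mem_insert_iff.2 (Or.inl rfl)
      rcases ZFSet.mem_insert_iff.1 this with h | h
      · exact h
      · exact absurd (hyx' y h) hy2
    subst hyy'
    have hxx' : x = x' := by
      apply ZFSet.ext
      intro z
      constructor
      · intro hz
        have : z ∈ insert y x' := heq ▸ ZFSet.mem_insert_iff.2 (Or.inr hz)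
        rcases ZFSet.mem_insert_iff.1 this with rfl | h
        · exact absurd (hyx z hz) hy2
        · exact h
      · intro hz
        have : z ∈ insert y x := heq ▸ ZFSet.mem_insert_iff.2 (Or.inr hz)
        rcases ZFSet.mem_insert_iff.1 this with rfl | h
        · exact absurd (hyx' z hz) hy2
        · exact h
    simp [hxx']
  -- pass to finsets
  rw [Set.ncard_eq_toFinset_card S hSfin, Set.ncard_eq_toFinset_card T hTfin]
  have hle := Finset.card_le_card_of_injOn (fun p : HFSet × HFSet => insert p.2 p.1)
    (s := hSfin.toFinset ×ˢ hSfin.toFinset) (t := hTfin.toFinset)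
    (by
      rintro ⟨x, y⟩ hp
      have hp : (x, y) ∈ hSfin.toFinset ×ˢ hSfin.toFinset := hp
      simp only [Finset.mem_product, Set.Finite.mem_toFinset, Finset.mem_coe] at hp ⊢
      exact hmap ⟨x, y⟩ hp.1 hp.2)
    (by
      rintro ⟨x, y⟩ hp ⟨x', y'⟩ hq heq
      simp only [Finset.coe_product, Set.mem_prod, Set.Finite.mem_toFinset,
        Finset.mem_coe] at hp hq
      exact hinj ⟨x, y⟩ ⟨x', y'⟩ hp.1 hp.2 hq.1 hq.2 heq)
  calc hSfin.toFinset.card ^ 2 = (hSfin.toFinset ×ˢ hSfin.toFinset).card := by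
        rw [Finset.card_product]; ring
    _ ≤ hTfin.toFinset.card := hle

def sOne : HFSet := insert ∅ ∅

lemma empty_ne_sing : (∅ : HFSet) ≠ sOne := by
  intro h
  have hmem : (∅ : HFSet) ∈ sOne := ZFSet.mem_insert_iff.2 (Or.inl rfl)
  rw [← h] at hmem
  simp at hmem

lemma c_zero : c 0 = 1 := by
  have h0 : Az ((0 : ℕ) : ℤ) = {∅} := by simp [Az, A]
  have h1 : Az (((0 : ℕ) : ℤ) - 1) = ∅ := by norm_num [Az]
  rw [c, h0, h1, Set.diff_empty, Set.ncard_singleton]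

lemma c_one : c 1 = 1 := by
  rw [c_eq 1 le_rfl]
  have hA1 : A 1 \ A 0 = {sOne} := by
    ext z
    simp only [Set.mem_diff, Set.mem_singleton_iff]
    constructor
    · rintro ⟨hz, hz0⟩
      rcases A_succ_mem_iff.1 hz with rfl | ⟨x, hx, y, hy, rfl⟩
      · exact absurd (by simp [A]) hz0
      · simp only [A, Set.mem_singleton_iff] at hx hy
        subst hx; subst hy; rfl
    · rintro rfl
      refine ⟨A_succ_mem_iff.2 (Or.inr ⟨(∅:HFSet), by simp [A], (∅:HFSet), by simp [A], rfl⟩), ?_⟩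
      simp only [A, Set.mem_singleton_iff]
      intro h
      exact empty_ne_sing h.symm
  simp [hA1]

lemma part1 : ∀ n : ℕ, 1 ≤ n → c (n - 1) ^ 2 ≤ c n := by
  intro n hn
  rcases Nat.lt_or_ge n 2 with h | h
  · interval_cases n
    simp [c_zero, c_one]
  · obtain ⟨m, rfl⟩ : ∃ m, n = m + 1 := ⟨n - 1, by omega⟩
    have hm : 1 ≤ m := by omega
    simp only [Nat.add_sub_cancel]
    rw [c_eq (m + 1) (by omega), c_eq m hm]
    simp only [Nat.add_sub_cancel]
    exact key m hm

lemma part2 : ∀ n k : ℕ, k ≤ n → c (n - k) ^ 2 ^ k ≤ c n := by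
  intro n k
  induction k with
  | zero => simp
  | succ k ih =>
    intro hk
    have hk' : k ≤ n := by omega
    have h1 : c (n - (k + 1)) ^ 2 ≤ c (n - k) := by
      have := part1 (n - k) (by omega)
      have he : n - k - 1 = n - (k + 1) := by omega
      rwa [he] at this
    calc c (n - (k + 1)) ^ 2 ^ (k + 1)
        = (c (n - (k + 1)) ^ 2) ^ 2 ^ k := by
          rw [← pow_mul, pow_succ, mul_comm]
      _ ≤ c (n - k) ^ 2 ^ k := Nat.pow_le_pow_left h1 _
      _ ≤ c n := ih hk'

lemma c_two : 2 ≤ c 2 := by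
  rw [c_eq 2 (by norm_num)]
  have hmemA1 : ∀ z : HFSet, z ∈ A 1 ↔ z = ∅ ∨ z = sOne := by
    intro z
    rw [A_succ_mem_iff]
    constructor
    · rintro (rfl | ⟨x, hx, y, hy, rfl⟩)
      · exact Or.inl rfl
      · simp only [A, Set.mem_singleton_iff] at hx hy
        subst hx; subst hy; exact Or.inr rfl
    · rintro (rfl | rfl)
      · exact Or.inl rfl
      · exact Or.inr ⟨(∅:HFSet), by simp [A], (∅:HFSet), by simp [A], rfl⟩
  have hsingA1 : sOne ∈ A 1 := (hmemA1 _).2 (Or.inr rfl)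
  have hemptyA1 : (∅ : HFSet) ∈ A 1 := (hmemA1 _).2 (Or.inl rfl)
  have hne1 : insert sOne (∅ : HFSet) ≠ ∅ := by
    intro h
    have hmem : sOne ∈ insert sOne (∅:HFSet) :=
      ZFSet.mem_insert_iff.2 (Or.inl rfl)
    rw [h] at hmem
    simp at hmem
  have hne2 : insert sOne (sOne) ≠ ∅ := by
    intro h
    have hmem : sOne ∈ insert sOne (sOne) :=
      ZFSet.mem_insert_iff.2 (Or.inl rfl)
    rw [h] at hmem
    simp at hmem
  have hnotmem : sOne ∉ sOne := by
    intro hmem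
    rcases ZFSet.mem_insert_iff.1 hmem with h' | h'
    · exact empty_ne_sing h'.symm
    · simp at h'
  have hne1' : insert sOne (∅ : HFSet) ≠ sOne := by
    intro h
    have hmem : sOne ∈ insert sOne (∅:HFSet) :=
      ZFSet.mem_insert_iff.2 (Or.inl rfl)
    rw [h] at hmem
    exact hnotmem hmem
  have hne2' : insert sOne (sOne) ≠ sOne := by
    intro h
    have hmem : sOne ∈ insert sOne (sOne) :=
      ZFSet.mem_insert_iff.2 (Or.inl rfl)
    rw [h] at hmem
    exact hnotmem hmem
  have hx12 : insert sOne (∅ : HFSet) ≠ insert sOne (sOne) := by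
    intro h
    have hmem : (∅:HFSet) ∈ insert sOne (sOne) :=
      ZFSet.mem_insert_iff.2 (Or.inr (ZFSet.mem_insert_iff.2 (Or.inl rfl)))
    rw [← h] at hmem
    rcases ZFSet.mem_insert_iff.1 hmem with h' | h'
    · exact empty_ne_sing h'
    · simp at h'
  have hsub : ({insert sOne (∅ : HFSet),
      insert sOne (sOne)} : Set HFSet) ⊆ A 2 \ A 1 := by
    rintro z (rfl | rfl)
    · refine ⟨A_succ_mem_iff.2 (Or.inr ⟨∅, hemptyA1, sOne, hsingA1, rfl⟩), ?_⟩
      intro h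
      rcases (hmemA1 _).1 h with h' | h'
      · exact hne1 h'
      · exact hne1' h'
    · refine ⟨A_succ_mem_iff.2 (Or.inr ⟨sOne, hsingA1, sOne, hsingA1, rfl⟩), ?_⟩
      intro h
      rcases (hmemA1 _).1 h with h' | h'
      · exact hne2 h'
      · exact hne2' h'
  have h2 : (2:ℕ) = ({insert sOne (∅ : HFSet),
      insert sOne (sOne)} : Set HFSet).ncard :=
    (Set.ncard_pair hx12).symm
  exact h2.trans_le (Set.ncard_le_ncard hsub ((A_finite 2).diff))

theorem stmt10 :
    (∀ n : ℕ, 1 ≤ n → c (n - 1) ^ 2 ≤ c n) ∧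
    (∀ n k : ℕ, k ≤ n → c (n - k) ^ 2 ^ k ≤ c n) ∧
    (∀ n : ℕ, 2 ≤ n → 2 ^ 2 ^ (n - 2) ≤ c n) := by
  refine ⟨part1, part2, ?_⟩
  intro n hn
  have h := part2 n (n - 2) (by omega)
  have he : n - (n - 2) = 2 := by omega
  rw [he] at h
  calc 2 ^ 2 ^ (n - 2) ≤ c 2 ^ 2 ^ (n - 2) := Nat.pow_le_pow_left c_two _
    _ ≤ c n := h
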